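/- arXiv:2504.07284 — 2 statements merged into one kernel-verified Lean document; each statement's English description precedes it below -/
import Mathlib

section
/- Let ε ∈ (0, 1/2) and let r ≥ 3 be an integer. There exists a constant c = c(ε, r) > 0 such that if p = p(n) ≤ c n^{-2/r}, then with high probability G_r(n,p) does NOT contain any K_r-tiling that covers all but at most εn vertices in each vertex class. -/
/-!
A `K_r`-tiling missing fewer than `n / 2` vertices of class `0` contains `m = ⌈n / 2⌉`
vertex-disjoint transversal `r`-cliques. Listed by their vertex in class `0`, such families are
determined by an `m`-subset of that class and `(r - 1) m` further vertices, so there are at most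
`2 ^ n * n ^ ((r - 1) m)` of them, and each one is present with probability `p ^ (m * C(r, 2))`.
Since `(n ^ (-2 / r)) ^ C(r, 2) = n ^ (-(r - 1))`, for `p ≤ n ^ (-2 / r) / 4` the expected
number of present families is at most `2 ^ n * 4 ^ (-m * C(r, 2)) ≤ 2 ^ (-n)`, and the
first-moment method finishes the proof.
-/

open MeasureTheory Filter Finset
open scoped Classical

abbrev MV (r n : ℕ) := Fin r × Fin n

noncomputable def bernoulliMeasure (p : ℝ) : Measure Bool :=
  ENNReal.ofReal p • Measure.dirac true + ENNReal.ofReal (1 - p) • Measure.dirac false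

noncomputable def grpMeasure (r n : ℕ) (p : ℝ) :
    Measure (Sym2 (MV r n) → Bool) :=
  Measure.pi fun _ => bernoulliMeasure p

def sampleGraph (r n : ℕ) (ω : Sym2 (MV r n) → Bool) : SimpleGraph (MV r n) where
  Adj u v := u.1 ≠ v.1 ∧ ω s(u, v) = true
  symm := ⟨fun u v h => ⟨h.1.symm, by rw [Sym2.eq_swap]; exact h.2⟩⟩
  loopless := ⟨fun u h => h.1 rfl⟩

def sampleGraphTail (r n : ℕ) (ω : Sym2 (MV r n) → Bool) : SimpleGraph (MV r n) where
  Adj u v := u.1 ≠ v.1 ∧ u.1.val ≠ 0 ∧ v.1.val ≠ 0 ∧ ω s(u, v) = true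
  symm := ⟨fun u v h => ⟨h.1.symm, h.2.2.1, h.2.1, by rw [Sym2.eq_swap]; exact h.2.2.2⟩⟩
  loopless := ⟨fun u h => h.1 rfl⟩

def IsMultipartite (r n : ℕ) (G : SimpleGraph (MV r n)) : Prop :=
  ∀ u v, G.Adj u v → u.1 ≠ v.1

noncomputable def classFinset (r n : ℕ) (i : ℕ) : Finset (MV r n) :=
  Finset.univ.filter (fun v => v.1.val = i)

noncomputable def degIn (r n : ℕ) (G : SimpleGraph (MV r n)) (v : MV r n) (j : Fin r) : ℕ :=
  Set.ncard {u : MV r n | u.1 = j ∧ G.Adj v u}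

def MinDegCond (r n : ℕ) (G : SimpleGraph (MV r n)) (a : ℝ) : Prop :=
  ∀ v : MV r n, ∀ j : Fin r, j ≠ v.1 → a ≤ (degIn r n G v j : ℝ)

def IsKrTiling {W : Type*} (G : SimpleGraph W) (r : ℕ) (T : Finset (Finset W)) : Prop :=
  (∀ t ∈ T, t.card = r ∧ G.IsClique (t : Set W)) ∧
  (T : Set (Finset W)).PairwiseDisjoint id

def HasPerfectKrTiling {W : Type*} (G : SimpleGraph W) (r : ℕ) : Prop :=
  ∃ T : Finset (Finset W), IsKrTiling G r T ∧ ∀ v : W, ∃ t ∈ T, v ∈ t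

noncomputable def relDensity {A B : Type*} (R : A → B → Prop) (s : Finset A) (t : Finset B) : ℝ :=
  (Set.ncard {p : A × B | p.1 ∈ s ∧ p.2 ∈ t ∧ R p.1 p.2} : ℝ) / ((s.card : ℝ) * (t.card : ℝ))

def IsRegularPairR {A B : Type*} (R : A → B → Prop) (ε : ℝ) (s : Finset A) (t : Finset B) : Prop :=
  ∀ X ⊆ s, ∀ Y ⊆ t, ε * s.card ≤ X.card → ε * t.card ≤ Y.card →
    |relDensity R s t - relDensity R X Y| < ε

def IsSuperRegularR {A B : Type*} (R : A → B → Prop) (ε d : ℝ) (s : Finset A) (t : Finset B) : Prop :=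
  (∀ X ⊆ s, ∀ Y ⊆ t, ε * s.card ≤ X.card → ε * t.card ≤ Y.card → d < relDensity R X Y) ∧
  (∀ a ∈ s, d * t.card < (Set.ncard {b | b ∈ t ∧ R a b} : ℝ)) ∧
  (∀ b ∈ t, d * s.card < (Set.ncard {a | a ∈ s ∧ R a b} : ℝ))

def IsTupleF (r n : ℕ) (G : SimpleGraph (MV r n)) (d : ℝ)
    (g : {k : Fin r // k.val ≠ 0} → MV r n) : Prop :=
  (∀ k, (g k).1 = k.1) ∧
  ((d/2)^(r-1) * n ≤ (Set.ncard {u : MV r n | u.1.val = 0 ∧ ∀ k, G.Adj u (g k)} : ℝ))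

/-- A `K_r`-tiling of `G` covering all but at most `ε * n` vertices in each vertex class. -/
def KrTilingCovers (r n : ℕ) (G : SimpleGraph (MV r n)) (ε : ℝ) : Prop :=
  ∃ T : Finset (Finset (MV r n)), IsKrTiling G r T ∧
    ∀ i : Fin r,
      (Set.ncard {v : MV r n | v.1 = i ∧ ∀ t ∈ T, v ∉ t} : ℝ) ≤ ε * n

open Function

lemma injective_sym2Map_of_injective_uncurry {ι κ V : Type*} {w : ι → κ → V}
    (hw : Injective (uncurry w)) : Injective fun x : ι × Sym2 κ => x.2.map (w x.1) := by
  rintro ⟨i, e⟩ ⟨i', e'⟩ h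
  induction e using Sym2.ind with | _ a b =>
  induction e' using Sym2.ind with | _ a' b' =>
  simp only [Sym2.map_mk, Sym2.eq_iff] at h
  rcases h with ⟨ha, hb⟩ | ⟨ha, hb⟩
  · obtain ⟨rfl, rfl⟩ := Prod.ext_iff.1 (@hw (i, a) (i', a') ha)
    obtain ⟨-, rfl⟩ := Prod.ext_iff.1 (@hw (i, b) (_, b') hb)
    rfl
  · obtain ⟨rfl, rfl⟩ := Prod.ext_iff.1 (@hw (i, a) (i', b') ha)
    obtain ⟨-, rfl⟩ := Prod.ext_iff.1 (@hw (i, b) (_, a') hb)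
    simp [Sym2.eq_swap]

section BernoulliProduct

variable {p : ℝ}

lemma isProbabilityMeasure_bernoulliMeasure (h0 : 0 ≤ p) (h1 : p ≤ 1) :
    IsProbabilityMeasure (bernoulliMeasure p) := by
  constructor
  simp [bernoulliMeasure, ← ENNReal.ofReal_add h0 (sub_nonneg.2 h1)]

lemma pi_bernoulliMeasure_forall_true {E : Type*} [Fintype E] (h0 : 0 ≤ p) (h1 : p ≤ 1)
    (F : Finset E) :
    Measure.pi (fun _ : E => bernoulliMeasure p) {ω | ∀ e ∈ F, ω e = true} =
      ENNReal.ofReal p ^ #F := by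
  have := isProbabilityMeasure_bernoulliMeasure h0 h1
  have hset : {ω : E → Bool | ∀ e ∈ F, ω e = true} = (F : Set E).pi fun _ => {true} := by
    ext ω
    simp
  rw [hset, Measure.pi_pi_finset]
  simp [bernoulliMeasure]

lemma isProbabilityMeasure_grpMeasure (r n : ℕ) (h0 : 0 ≤ p) (h1 : p ≤ 1) :
    IsProbabilityMeasure (grpMeasure r n p) := by
  have := isProbabilityMeasure_bernoulliMeasure h0 h1
  rw [grpMeasure]
  infer_instance

lemma pi_bernoulliMeasure_cliques {V ι κ : Type*} [Fintype V] [Fintype ι] [Fintype κ]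
    (h0 : 0 ≤ p) (h1 : p ≤ 1) {w : ι → κ → V} (hw : Injective (uncurry w)) :
    Measure.pi (fun _ : Sym2 V => bernoulliMeasure p)
        {ω | ∀ i k l, k ≠ l → ω s(w i k, w i l) = true} =
      ENNReal.ofReal p ^ (Fintype.card ι * (Fintype.card κ).choose 2) := by
  set edge : ι × {e : Sym2 κ // ¬e.IsDiag} → Sym2 V := fun x => x.2.1.map (w x.1)
  have hedge : Injective edge :=
    (injective_sym2Map_of_injective_uncurry hw).comp (injective_id.prodMap Subtype.val_injective)
  have hset : {ω : Sym2 V → Bool | ∀ i k l, k ≠ l → ω s(w i k, w i l) = true} =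
      {ω | ∀ e ∈ univ.image edge, ω e = true} := by
    ext ω
    simp only [Set.mem_ofPred_eq, mem_image, mem_univ, true_and, forall_exists_index,
      Prod.forall, Subtype.forall, edge]
    refine ⟨?_, fun h i k l hkl => h _ i s(k, l) (by simpa using hkl) rfl⟩
    rintro h _ i e he rfl
    induction e using Sym2.ind with | _ k l =>
    exact h i k l (by simpa using he)
  rw [hset, pi_bernoulliMeasure_forall_true h0 h1, card_image_of_injective _ hedge, card_univ,
    Fintype.card_prod, Sym2.card_subtype_not_diag]

end BernoulliProduct

namespace IsMultipartite

variable {r n : ℕ} {G : SimpleGraph (MV r n)}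

lemma injOn_fst (hG : IsMultipartite r n G) {t : Set (MV r n)} (ht : G.IsClique t) :
    Set.InjOn Prod.fst t :=
  fun u hu v hv huv => by_contra fun h => hG u v (ht hu hv h) huv

lemma exists_mem_fst_eq (hG : IsMultipartite r n G) {t : Finset (MV r n)} (hcard : #t = r)
    (ht : G.IsClique (t : Set (MV r n))) (k : Fin r) : ∃ v ∈ t, v.1 = k := by
  have himage : t.image Prod.fst = univ :=
    eq_univ_of_card _ (by rw [card_image_of_injOn (hG.injOn_fst ht), hcard, Fintype.card_fin])
  exact mem_image.1 (himage ▸ mem_univ k)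

end IsMultipartite

lemma half_card_le_card_of_card_compl_le {α : Type*} [Fintype α] [DecidableEq α] {ε : ℝ}
    (hε : ε < 1 / 2) {A : Finset α} (h : (#Aᶜ : ℝ) ≤ ε * Fintype.card α) :
    (Fintype.card α + 1) / 2 ≤ #A := by
  have hsum := card_add_card_compl A
  rcases (Fintype.card α).eq_zero_or_pos with h0 | hpos
  · omega
  · have : (2 * #Aᶜ : ℝ) < Fintype.card α := by
      have : (0 : ℝ) < Fintype.card α := by exact_mod_cast hpos
      nlinarith
    have : 2 * #Aᶜ < Fintype.card α := by exact_mod_cast this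
    omega

section Transversals

variable {r n m : ℕ} [NeZero r]

def transversalFamilies (r n m : ℕ) [NeZero r] : Finset (Fin m → Fin r → MV r n) :=
  {w | Injective (uncurry w) ∧ (∀ i k, (w i k).1 = k) ∧ StrictMono fun i => (w i 0).2}

lemma card_transversalFamilies_le :
    #(transversalFamilies r n m) ≤ 2 ^ n * n ^ ((r - 1) * m) := by
  let code (w : Fin m → Fin r → MV r n) :
      Finset (Fin n) × (Fin m → {k : Fin r // k ≠ 0} → Fin n) :=
    (univ.image fun i => (w i 0).2, fun i k => (w i k).2)
  have hcode : Set.InjOn code (transversalFamilies r n m) := by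
    intro w hw w' hw' h
    simp only [transversalFamilies, coe_filter, mem_univ, true_and, Set.mem_ofPred_eq] at hw hw'
    obtain ⟨-, hclass, hmono⟩ := hw
    obtain ⟨-, hclass', hmono'⟩ := hw'
    obtain ⟨hrange, hrest⟩ := Prod.ext_iff.1 h
    simp only [code] at hrange hrest
    have h0 : (fun i => (w i 0).2) = fun i => (w' i 0).2 := (hmono.range_inj hmono').1 <| by
      simpa using congrArg (fun s : Finset (Fin n) => (s : Set (Fin n))) hrange
    funext i k
    refine Prod.ext ((hclass i k).trans (hclass' i k).symm) ?_
    by_cases hk : k = 0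
    · subst hk
      exact congrFun h0 i
    · exact congrFun (congrFun hrest i) ⟨k, hk⟩
  calc #(transversalFamilies r n m)
      ≤ #(univ : Finset (Finset (Fin n) × (Fin m → {k : Fin r // k ≠ 0} → Fin n))) :=
        card_le_card_of_injOn code (fun _ _ => mem_coe.2 (mem_univ _)) hcode
    _ = 2 ^ n * n ^ ((r - 1) * m) := by simp [← pow_mul, mul_comm]

lemma exists_transversalFamily_of_isKrTiling {G : SimpleGraph (MV r n)}
    (hG : IsMultipartite r n G) {T : Finset (Finset (MV r n))} (hT : IsKrTiling G r T)
    {e : Fin m → Fin n} (he : StrictMono e) (hcov : ∀ i, ∃ t ∈ T, (0, e i) ∈ t) :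
    ∃ w ∈ transversalFamilies r n m, ∀ i k l, k ≠ l → G.Adj (w i k) (w i l) := by
  choose t htT het using hcov
  have hclique i : G.IsClique (t i : Set (MV r n)) := (hT.1 _ (htT i)).2
  have hfst i : Set.InjOn Prod.fst (t i : Set (MV r n)) := hG.injOn_fst (hclique i)
  choose w hwt hw using fun i => hG.exists_mem_fst_eq (hT.1 _ (htT i)).1 (hclique i)
  have hw0 i : w i 0 = (0, e i) := hfst i (hwt i 0) (het i) (hw i 0)
  have hne i k l (hkl : k ≠ l) : w i k ≠ w i l :=
    fun h => hkl (by rw [← hw i k, ← hw i l, h])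
  refine ⟨w, ?_, fun i k l hkl => hclique i (hwt i k) (hwt i l) (hne i k l hkl)⟩
  simp only [transversalFamilies, mem_filter, mem_univ, true_and]
  refine ⟨?_, hw, by simpa [hw0] using he⟩
  rintro ⟨i, k⟩ ⟨i', k'⟩ h
  obtain rfl : k = k' := by rw [← hw i k, ← hw i' k']; exact congrArg Prod.fst h
  have htt : t i = t i' := by
    by_contra hne
    have h' : w i k = w i' k := h
    exact disjoint_left.1 (hT.2 (mem_coe.2 (htT i)) (mem_coe.2 (htT i')) hne) (hwt i k)
      (h' ▸ hwt i' k)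
  have hee : ((0 : Fin r), e i) = (0, e i') :=
    hfst i (het i) (by rw [mem_coe, htt]; exact het i') rfl
  rw [he.injective (congrArg Prod.snd hee)]

lemma exists_transversalFamily_of_krTilingCovers {G : SimpleGraph (MV r n)}
    (hG : IsMultipartite r n G) {ε : ℝ} (hε : ε < 1 / 2) (h : KrTilingCovers r n G ε) :
    ∃ w ∈ transversalFamilies r n ((n + 1) / 2),
      ∀ i k l, k ≠ l → G.Adj (w i k) (w i l) := by
  obtain ⟨T, hT, hunc⟩ := h
  set covered : Finset (Fin n) := {s | ∃ t ∈ T, (0, s) ∈ t}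
  have huncovered :
      {v : MV r n | v.1 = 0 ∧ ∀ t ∈ T, v ∉ t} = Prod.mk 0 '' ↑coveredᶜ := by
    ext ⟨k, s⟩
    constructor
    · rintro ⟨rfl, h⟩
      exact ⟨s, by simpa [covered] using h, rfl⟩
    · rintro ⟨s, hs, ⟨⟩⟩
      exact ⟨rfl, by simpa [covered] using hs⟩
  have hcard : (n + 1) / 2 ≤ #covered := by
    have := hunc 0
    rw [huncovered, Set.ncard_image_of_injective _ (Prod.mk_right_injective 0),
      Set.ncard_coe_finset] at this
    simpa using half_card_le_card_of_card_compl_le (A := covered) hε (by simpa using this)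
  obtain ⟨S, hSc, hS⟩ := exists_subset_card_eq hcard
  refine exists_transversalFamily_of_isKrTiling hG hT (S.orderEmbOfFin hS).strictMono fun i => ?_
  simpa [covered] using hSc (S.orderEmbOfFin_mem hS i)

end Transversals

lemma rpow_neg_two_div_pow_choose_two {x : ℝ} (hx : 0 < x) {r : ℕ} (hr : 1 ≤ r) :
    (x ^ (-(2 : ℝ) / r)) ^ r.choose 2 = (x ^ (r - 1))⁻¹ := by
  rw [← Real.rpow_natCast, ← Real.rpow_mul hx.le, ← Real.rpow_natCast x,
    ← Real.rpow_neg hx.le, Nat.cast_choose_two, Nat.cast_sub hr]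
  congr 1
  have : (r : ℝ) ≠ 0 := by positivity
  field_simp
  push_cast
  ring

lemma two_pow_mul_pow_mul_pow_choose_two_le {r n m : ℕ} (hr : 3 ≤ r) (hn : 0 < n)
    (hm : n ≤ 2 * m) {p : ℝ} (h0 : 0 ≤ p) (hp : p ≤ 1 / 4 * (n : ℝ) ^ (-(2 : ℝ) / r)) :
    (2 ^ n * n ^ ((r - 1) * m) : ℝ) * p ^ (m * r.choose 2) ≤ (1 / 2) ^ n := by
  have hK : 2 ≤ r.choose 2 := (Nat.choose_le_choose 2 hr).trans' (by decide)
  calc (2 ^ n * n ^ ((r - 1) * m) : ℝ) * p ^ (m * r.choose 2)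
      ≤ 2 ^ n * n ^ ((r - 1) * m) * ((1 / 4) ^ (m * r.choose 2) *
          (((n : ℝ) ^ (-(2 : ℝ) / r)) ^ r.choose 2) ^ m) := by
        rw [← pow_mul, mul_comm (r.choose 2), ← mul_pow]
        gcongr
    _ = 2 ^ n * (1 / 4) ^ (m * r.choose 2) := by
        rw [rpow_neg_two_div_pow_choose_two (by positivity) (by omega), inv_pow, pow_mul]
        field_simp
    _ ≤ 2 ^ n * (1 / 4) ^ n := by
        gcongr 2 ^ n * ?_
        refine pow_le_pow_of_le_one (by norm_num) (by norm_num) (hm.trans ?_)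
        rw [mul_comm]
        exact Nat.mul_le_mul_left m hK
    _ = (1 / 2) ^ n := by rw [← mul_pow]; norm_num

lemma isMultipartite_sampleGraph {r n : ℕ} {ω : Sym2 (MV r n) → Bool} :
    IsMultipartite r n (sampleGraph r n ω) :=
  fun _ _ h => h.1

lemma grpMeasure_krTilingCovers_le {r n : ℕ} (hr : 3 ≤ r) (hn : 0 < n) {ε p : ℝ}
    (hε : ε < 1 / 2) (h0 : 0 ≤ p) (h1 : p ≤ 1)
    (hp : p ≤ 1 / 4 * (n : ℝ) ^ (-(2 : ℝ) / r)) :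
    grpMeasure r n p {ω | KrTilingCovers r n (sampleGraph r n ω) ε} ≤
      ENNReal.ofReal ((1 / 2) ^ n) := by
  have : NeZero r := ⟨by omega⟩
  set m := (n + 1) / 2
  calc grpMeasure r n p {ω | KrTilingCovers r n (sampleGraph r n ω) ε}
      ≤ grpMeasure r n p (⋃ w ∈ transversalFamilies r n m,
          {ω | ∀ i k l, k ≠ l → ω s(w i k, w i l) = true}) := by
        refine measure_mono fun ω hω => ?_
        obtain ⟨w, hw, hadj⟩ :=
          exists_transversalFamily_of_krTilingCovers isMultipartite_sampleGraph hε hω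
        exact Set.mem_biUnion hw fun i k l hkl => (hadj i k l hkl).2
    _ ≤ ∑ w ∈ transversalFamilies r n m,
          grpMeasure r n p {ω | ∀ i k l, k ≠ l → ω s(w i k, w i l) = true} :=
        measure_biUnion_finset_le _ _
    _ ≤ #(transversalFamilies r n m) • ENNReal.ofReal p ^ (m * r.choose 2) := by
        refine sum_le_card_nsmul _ _ _ fun w hw => le_of_eq ?_
        rw [grpMeasure]
        simpa using pi_bernoulliMeasure_cliques h0 h1 (mem_filter.1 hw).2.1
    _ ≤ ENNReal.ofReal ((2 ^ n * n ^ ((r - 1) * m) : ℝ) * p ^ (m * r.choose 2)) := by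
        rw [nsmul_eq_mul, ENNReal.ofReal_mul (by positivity), ENNReal.ofReal_pow h0]
        gcongr
        exact_mod_cast card_transversalFamilies_le
    _ ≤ ENNReal.ofReal ((1 / 2) ^ n) :=
        ENNReal.ofReal_le_ofReal (two_pow_mul_pow_mul_pow_choose_two_le hr hn (by omega) h0 hp)

theorem statement3_general (ε : ℝ) (hε1 : ε < 1 / 2) (r : ℕ) (hr : 3 ≤ r) :
    ∃ c : ℝ, 0 < c ∧
      ∀ p : ℕ → ℝ, (∀ n, 0 ≤ p n) → (∀ n, p n ≤ 1) →
        (∀ n : ℕ, p n ≤ c * (n : ℝ) ^ (-(2 : ℝ) / r)) →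
        Tendsto (fun n => grpMeasure r n (p n)
            {ω | ¬ KrTilingCovers r n (sampleGraph r n ω) ε})
          atTop (nhds 1) := by
  refine ⟨1 / 4, by norm_num, fun p hp0 hp1 hpc => ?_⟩
  have hcovers : Tendsto (fun n => grpMeasure r n (p n)
      {ω | KrTilingCovers r n (sampleGraph r n ω) ε}) atTop (nhds 0) := by
    have hlim : Tendsto (fun n : ℕ => ENNReal.ofReal ((1 / 2) ^ n)) atTop (nhds 0) := by
      simpa using ENNReal.tendsto_ofReal
        (tendsto_pow_atTop_nhds_zero_of_lt_one (by norm_num : (0 : ℝ) ≤ 1 / 2) (by norm_num))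
    refine tendsto_of_tendsto_of_tendsto_of_le_of_le' tendsto_const_nhds hlim
      (.of_forall fun _ => zero_le) ?_
    filter_upwards [eventually_gt_atTop 0] with n hn
    exact grpMeasure_krTilingCovers_le hr hn hε1 (hp0 n) (hp1 n) (hpc n)
  have hcompl (n : ℕ) :
      grpMeasure r n (p n) {ω | ¬ KrTilingCovers r n (sampleGraph r n ω) ε} =
        1 - grpMeasure r n (p n) {ω | KrTilingCovers r n (sampleGraph r n ω) ε} := by
    have := isProbabilityMeasure_grpMeasure r n (hp0 n) (hp1 n)
    exact prob_compl_eq_one_sub (DiscreteMeasurableSpace.forall_measurableSet _)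
  simpa [hcompl] using ENNReal.Tendsto.sub tendsto_const_nhds hcovers (Or.inl ENNReal.one_ne_top)

theorem statement3 (ε : ℝ) (hε0 : 0 < ε) (hε1 : ε < 1 / 2) (r : ℕ) (hr : 3 ≤ r) :
    ∃ c : ℝ, 0 < c ∧
      ∀ p : ℕ → ℝ, (∀ n, 0 ≤ p n) → (∀ n, p n ≤ 1) →
        (∀ n : ℕ, p n ≤ c * (n : ℝ) ^ (-(2 : ℝ) / r)) →
        Tendsto (fun n => grpMeasure r n (p n)
            {ω | ¬ KrTilingCovers r n (sampleGraph r n ω) ε})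
          atTop (nhds 1) :=
  statement3_general ε hε1 r hr
end

section
/- Let r ≥ 3 and let ε, d > 0 with ε ≤ (d/2)^{r−2}. Let G be a balanced r-partite graph on V_1 ⊔ ⋯ ⊔ V_r with |V_i| = n for all i, such that (V_1, V_i) is (ε, d)-super-regular for all i ∈ {2, …, r}. For X ⊆ V_1, let F_X = F_X[V_2, …, V_r] be the (r−1)-uniform (r−1)-partite hypergraph on V_2, …, V_r whose edges are the tuples (v_2, …, v_r) that have at least (d/2)^{r−1}·|V_1| common neighbors in V_1 and at least (d/2)^{r−1}·|X| common neighbors in X. If |X| ≥ (2/d)^{r−2}·ε·n, then, for each i ∈ {2, …, r}, all but at most εn vertices of V_i have degree at least (1 − 2(r−2)ε)·n^{r−2} in F_X. -/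
open MeasureTheory Filter Finset
open scoped Classical

/-- An edge of the auxiliary hypergraph `F_X`: a tuple with one vertex in each of the
classes `V_2, …, V_r` having at least `(d/2)^{r-1}·|V_1|` common neighbors in `V_1` and
at least `(d/2)^{r-1}·|X|` common neighbors in `X`. -/
def IsTupleFX (r n : ℕ) (G : SimpleGraph (MV r n)) (d : ℝ) (X : Finset (MV r n))
    (g : {k : Fin r // k.val ≠ 0} → MV r n) : Prop :=
  IsTupleF r n G d g ∧
  (d / 2) ^ (r - 1) * X.card ≤
    (Set.ncard {u : MV r n | u ∈ X ∧ ∀ k, G.Adj u (g k)} : ℝ)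


/-!
Fix `v ∈ V_i`. By super-regularity, at most `εn` vertices of `V_i` have fewer than `d|X|`
neighbours in `X`, so assume `v` has at least `d|X|` of them (and more than `dn` in `V_1`,
by the minimum-degree condition). Choose the vertices of the remaining `r - 2` classes one at a
time, tracking the common neighbourhoods in `V_1` and in `X` of `v` and the vertices chosen so
far. While both have at least `εn` elements, super-regularity lets all but at most `2εn` choices
of the next vertex keep at least a `d`-fraction of each; `ε ≤ (d/2)^{r-2}` and
`|X| ≥ (2/d)^{r-2} εn` keep both above `εn` until the end. Hence at least
`(1 - 2(r-2)ε) n^{r-2}` tuples survive, and each one, together with `v`, has at least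
`d^{r-1} n` common neighbours in `V_1` and `d^{r-1} |X|` in `X`: an edge of `F_X` through `v`.
-/

open Function

section GoodChain

variable {α : Type*}

def IsGoodChain (good : ∀ k, (Fin k → α) → α → Prop) : ∀ m, (Fin m → α) → Prop
  | 0, _ => True
  | m + 1, f => IsGoodChain good m (Fin.init f) ∧ good m (Fin.init f) (f (Fin.last m))

theorem IsGoodChain.mono {good good' : ∀ k, (Fin k → α) → α → Prop}
    (h : ∀ k p a, good k p a → good' k p a) :
    ∀ {m} {f : Fin m → α}, IsGoodChain good m f → IsGoodChain good' m f
  | 0, _, _ => trivial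
  | _ + 1, _, ⟨hinit, hlast⟩ => ⟨hinit.mono h, h _ _ _ hlast⟩

variable [Fintype α] (good : ∀ k, (Fin k → α) → α → Prop)

theorem card_isGoodChain_succ (m : ℕ) :
    #{f : Fin (m + 1) → α | IsGoodChain good (m + 1) f} =
      ∑ p with IsGoodChain good m p, #{a | good m p a} := by
  rw [← card_sigma]
  refine (card_bij' (fun x _ => Fin.snoc x.1 x.2) (fun f _ => ⟨Fin.init f, f (Fin.last m)⟩)
    ?_ ?_ ?_ ?_).symm
  · rintro ⟨p, a⟩ h
    simp only [mem_sigma, mem_filter, mem_univ, true_and] at h ⊢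
    simpa [IsGoodChain] using h
  · intro f hf
    simp only [mem_sigma, mem_filter, mem_univ, true_and] at hf ⊢
    simpa [IsGoodChain] using hf
  · simp
  · simp

theorem card_isGoodChain_ge {δ : ℝ} (hδ : 0 ≤ δ) (m : ℕ)
    (hbad : ∀ k < m, ∀ p : Fin k → α, IsGoodChain good k p →
      (#{a | ¬good k p a} : ℝ) ≤ δ * Fintype.card α) :
    (1 - m * δ) * (Fintype.card α : ℝ) ^ m ≤ #{f : Fin m → α | IsGoodChain good m f} := by
  induction m with
  | zero => simp [IsGoodChain]
  | succ m ih =>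
    set N : ℝ := (Fintype.card α : ℝ)
    set S : Finset (Fin m → α) := {p | IsGoodChain good m p}
    have hS : (#S : ℝ) ≤ N ^ m := by
      simpa [N] using (Nat.cast_le (α := ℝ)).2 (card_le_univ S)
    have hgood : ∀ p ∈ S, N - δ * N ≤ #{a | good m p a} := by
      intro p hp
      have hsplit : N = #{a | good m p a} + #{a | ¬good m p a} := by
        simp only [N, ← card_univ]
        exact_mod_cast (card_filter_add_card_filter_not (s := univ) (good m p)).symm
      linarith [hbad m m.lt_succ_self p (mem_filter.1 hp).2]
    have ih := ih fun k hk => hbad k (hk.trans m.lt_succ_self)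
    calc (1 - ↑(m + 1) * δ) * N ^ (m + 1)
        = N * ((1 - m * δ) * N ^ m) - δ * N * N ^ m := by push_cast; ring
      _ ≤ N * #S - δ * N * #S := by gcongr
      _ = ∑ _p ∈ S, (N - δ * N) := by rw [sum_const, nsmul_eq_mul]; ring
      _ ≤ ∑ p ∈ S, (#{a | good m p a} : ℝ) := sum_le_sum hgood
      _ = #{f : Fin (m + 1) → α | IsGoodChain good (m + 1) f} := by
          rw [card_isGoodChain_succ]; push_cast; rfl

end GoodChain

section SuperRegular

variable {A B : Type*} {R : A → B → Prop} {ε d : ℝ} {s : Finset A} {t : Finset B}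

theorem relDensity_eq_sum (R : A → B → Prop) (s : Finset A) (t : Finset B) :
    relDensity R s t = (∑ b ∈ t, #{a ∈ s | R a b} : ℝ) / (#s * #t) := by
  have : {p : A × B | p.1 ∈ s ∧ p.2 ∈ t ∧ R p.1 p.2} = ↑({p ∈ s ×ˢ t | R p.1 p.2}) := by
    ext p; simp [and_assoc]
  rw [relDensity, this, Set.ncard_coe_finset, card_filter, sum_product_right]
  simp only [card_filter]
  push_cast
  rfl

theorem IsSuperRegularR.mul_card_lt_card_filter_right (h : IsSuperRegularR R ε d s t) {b : B}
    (hb : b ∈ t) : d * #s < #{a ∈ s | R a b} := by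
  simpa [← coe_filter, Set.ncard_coe_finset] using h.2.2 b hb

theorem IsSuperRegularR.lt_one (h : IsSuperRegularR R ε d s t) {b : B} (hb : b ∈ t) : d < 1 := by
  have hlt := h.mul_card_lt_card_filter_right hb
  have hle : (#{a ∈ s | R a b} : ℝ) ≤ #s := by exact_mod_cast card_filter_le _ _
  nlinarith

theorem IsSuperRegularR.card_filter_lt_le (h : IsSuperRegularR R ε d s t) (hε : 0 ≤ ε)
    {S : Finset A} (hS : S ⊆ s) (hSs : ε * #s ≤ #S) :
    (#{b ∈ t | #{a ∈ S | R a b} < d * #S} : ℝ) ≤ ε * #t := by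
  set T := {b ∈ t | (#{a ∈ S | R a b} : ℝ) < d * #S}
  by_contra! hT
  have hdense : d < relDensity R S T := h.1 S hS T (filter_subset _ _) hSs hT.le
  have hTne : T.Nonempty := by
    have : (0 : ℝ) < #T := (mul_nonneg hε (Nat.cast_nonneg _)).trans_lt hT
    exact card_pos.1 (by exact_mod_cast this)
  have hsum : (∑ b ∈ T, #{a ∈ S | R a b} : ℝ) < d * (#S * #T) :=
    calc (∑ b ∈ T, #{a ∈ S | R a b} : ℝ) < ∑ _b ∈ T, d * #S :=
          sum_lt_sum_of_nonempty hTne fun b hb => (mem_filter.1 hb).2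
      _ = d * (#S * #T) := by rw [sum_const, nsmul_eq_mul]; ring
  have hpos : (0 : ℝ) < #S * #T := (by positivity : (0 : ℝ) ≤ #S * #T).lt_of_ne fun h0 => by
    rw [← h0, mul_zero] at hsum
    exact hsum.not_ge (sum_nonneg fun _ _ => Nat.cast_nonneg _)
  rw [relDensity_eq_sum, lt_div_iff₀ hpos] at hdense
  linarith

end SuperRegular

theorem card_filter_classFinset {r n : ℕ} (j : Fin r) (P : MV r n → Prop) :
    #{b ∈ classFinset r n j | P b} = #{a : Fin n | P (j, a)} := by
  refine card_nbij' Prod.snd (fun a => (j, a)) ?_ ?_ ?_ ?_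
  · rintro ⟨j', a⟩ hb
    simp only [classFinset, coe_filter, mem_filter, mem_univ, true_and] at hb
    obtain rfl : j' = j := Fin.ext hb.1
    simpa using hb.2
  · intro a ha
    simp_all [classFinset]
  · rintro ⟨j', a⟩ hb
    simp only [classFinset, coe_filter, mem_filter, mem_univ, true_and] at hb
    obtain rfl : j' = j := Fin.ext hb.1
    rfl
  · intro a _
    rfl

theorem card_classFinset {r : ℕ} (n : ℕ) {j : ℕ} (hj : j < r) : #(classFinset r n j) = n := by
  simpa using card_filter_classFinset (n := n) ⟨j, hj⟩ fun _ => True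

section CommonNbhd

-- A chain `p` of choices stands for the vertices `(c k, p k)`: `c` lists the classes in the order
-- in which they are filled.
variable {r n : ℕ} (G : SimpleGraph (MV r n)) (c : ℕ → {j : Fin r // j.val ≠ 0})

noncomputable def commonNbhd (A : Finset (MV r n)) {k : ℕ} (p : Fin k → Fin n) :
    Finset (MV r n) :=
  {u ∈ A | ∀ s : Fin k, G.Adj u ((c s).1, p s)}

theorem commonNbhd_zero (A : Finset (MV r n)) (p : Fin 0 → Fin n) :
    commonNbhd G c A p = A := by
  simp [commonNbhd]

theorem commonNbhd_succ (A : Finset (MV r n)) {k : ℕ} (f : Fin (k + 1) → Fin n) :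
    commonNbhd G c A f =
      {u ∈ commonNbhd G c A (Fin.init f) | G.Adj u ((c k).1, f (Fin.last k))} := by
  ext u
  simp only [commonNbhd, mem_filter, Fin.forall_fin_succ', and_assoc]
  rfl

def IsDenseStep (d : ℝ) (A : Finset (MV r n)) (k : ℕ) (p : Fin k → Fin n) (a : Fin n) : Prop :=
  d * #(commonNbhd G c A p) ≤ #{u ∈ commonNbhd G c A p | G.Adj u ((c k).1, a)}

variable {G c} {ε d : ℝ} {A : Finset (MV r n)}

theorem pow_mul_card_le_card_commonNbhd (hd : 0 ≤ d) :
    ∀ {m} {f : Fin m → Fin n}, IsGoodChain (IsDenseStep G c d A) m f →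
      d ^ m * #A ≤ #(commonNbhd G c A f)
  | 0, f, _ => by simp [commonNbhd_zero]
  | m + 1, f, ⟨hinit, hlast⟩ => by
    rw [commonNbhd_succ, pow_succ, mul_comm _ d, mul_assoc]
    exact (mul_le_mul_of_nonneg_left (pow_mul_card_le_card_commonNbhd hd hinit) hd).trans hlast

theorem card_not_isDenseStep_le (hε : 0 ≤ ε) {k : ℕ}
    (hsr : IsSuperRegularR G.Adj ε d (classFinset r n 0) (classFinset r n (c k).1))
    (hA : A ⊆ classFinset r n 0) {p : Fin k → Fin n}
    (hlarge : ε * n ≤ #(commonNbhd G c A p)) :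
    (#{a | ¬IsDenseStep G c d A k p a} : ℝ) ≤ ε * n := by
  have h := hsr.card_filter_lt_le hε (S := commonNbhd G c A p) ((filter_subset _ _).trans hA)
    (by rwa [card_classFinset n (c k).1.pos])
  rw [card_classFinset n (c k).1.isLt, card_filter_classFinset] at h
  simpa [IsDenseStep] using h

theorem card_isGoodChain_isDenseStep_ge (hε : 0 ≤ ε) (hd : 0 ≤ d)
    (hsr : ∀ i : Fin r, i.val ≠ 0 →
      IsSuperRegularR G.Adj ε d (classFinset r n 0) (classFinset r n i.val))
    {A₁ A₂ : Finset (MV r n)} (hA₁ : A₁ ⊆ classFinset r n 0) (hA₂ : A₂ ⊆ classFinset r n 0)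
    (m : ℕ) (h₁ : ∀ k < m, ε * n ≤ d ^ k * #A₁) (h₂ : ∀ k < m, ε * n ≤ d ^ k * #A₂) :
    (1 - m * (2 * ε)) * (n : ℝ) ^ m ≤
      #{f : Fin m → Fin n | IsGoodChain
        (fun k p a => IsDenseStep G c d A₁ k p a ∧ IsDenseStep G c d A₂ k p a) m f} := by
  have hbad : ∀ A ⊆ classFinset r n 0, (∀ k < m, ε * n ≤ d ^ k * #A) →
      ∀ k < m, ∀ p : Fin k → Fin n, IsGoodChain (IsDenseStep G c d A) k p →
        (#{a | ¬IsDenseStep G c d A k p a} : ℝ) ≤ ε * n :=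
    fun A hA hlarge k hk p hp => card_not_isDenseStep_le hε (hsr _ (c k).2) hA
      ((hlarge k hk).trans (pow_mul_card_le_card_commonNbhd hd hp))
  calc (1 - m * (2 * ε)) * (n : ℝ) ^ m = (1 - m * (2 * ε)) * (Fintype.card (Fin n) : ℝ) ^ m := by
        rw [Fintype.card_fin]
    _ ≤ _ := card_isGoodChain_ge _ (by positivity) m fun k hk p hp => by
      have hunion : (#{a | ¬IsDenseStep G c d A₁ k p a ∨ ¬IsDenseStep G c d A₂ k p a} : ℝ) ≤
          #{a | ¬IsDenseStep G c d A₁ k p a} + #{a | ¬IsDenseStep G c d A₂ k p a} := by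
        rw [filter_or]; exact_mod_cast card_union_le _ _
      simp only [not_and_or, Fintype.card_fin]
      linarith [hbad A₁ hA₁ h₁ k hk p (hp.mono fun _ _ _ h => h.1),
        hbad A₂ hA₂ h₂ k hk p (hp.mono fun _ _ _ h => h.2)]

end CommonNbhd

theorem exists_injective_range_eq_compl {β : Type*} [Fintype β] {m : ℕ}
    (hβ : Fintype.card β = m + 1) (b : β) :
    ∃ c : ℕ → β, Injective (fun t : Fin m => c t) ∧
      ∀ x, x ∈ Set.range (fun t : Fin m => c t) ↔ x ≠ b := by
  have hcard : Fintype.card {x // x ≠ b} = m := by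
    rw [Fintype.card_subtype_compl, hβ, Fintype.card_subtype_eq]; rfl
  let e := (Fintype.equivFinOfCardEq hcard).symm
  refine ⟨fun t => if h : t < m then e ⟨t, h⟩ else b, fun s t hst => ?_, fun x => ⟨?_, ?_⟩⟩
  · simp only [Fin.is_lt, dif_pos] at hst
    exact e.injective (Subtype.ext hst)
  · rintro ⟨t, rfl⟩
    simpa using (e t).2
  · intro hx
    exact ⟨e.symm ⟨x, hx⟩, by simp⟩

theorem card_subtype_val_ne_zero (r : ℕ) : Fintype.card {j : Fin r // j.val ≠ 0} = r - 1 := by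
  rcases r with _ | r
  · simp
  · simp [Fintype.card_subtype, filter_ne', card_erase_of_mem]

theorem forall_extend_iff {ι κ β : Type*} {φ : ι → κ} (hφ : Injective φ) {k₀ : κ}
    (hk₀ : k₀ ∉ Set.range φ) (ψ : ι → β) (b : β) (P : β → Prop) :
    (∀ k, P (extend φ ψ (fun _ => b) k)) ↔ P b ∧ ∀ t, P (ψ t) := by
  refine ⟨fun h => ⟨?_, fun t => ?_⟩, fun ⟨hb, hψ⟩ k => ?_⟩
  · simpa [extend_apply' _ _ _ hk₀] using h k₀
  · simpa [hφ.extend_apply] using h (φ t)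
  · by_cases hk : ∃ t, φ t = k
    · obtain ⟨t, rfl⟩ := hk
      simpa [hφ.extend_apply] using hψ t
    · simpa [extend_apply' _ _ _ hk] using hb

theorem pow_mul_le_pow_mul_of_lt {d x y : ℝ} (hd0 : 0 ≤ d) (hd1 : d ≤ 1) (hx : 0 ≤ x)
    (hxy : d * x ≤ y) {k m : ℕ} (hkm : k < m) : d ^ m * x ≤ d ^ k * y :=
  calc d ^ m * x ≤ d ^ (k + 1) * x :=
        mul_le_mul_of_nonneg_right (pow_le_pow_of_le_one hd0 hd1 hkm) hx
    _ = d ^ k * (d * x) := by ring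
    _ ≤ d ^ k * y := by gcongr

theorem half_pow_succ_mul_le_pow_mul {d x y : ℝ} (hd : 0 ≤ d) (hx : 0 ≤ x) (hxy : d * x ≤ y)
    (m : ℕ) : (d / 2) ^ (m + 1) * x ≤ d ^ m * y :=
  calc (d / 2) ^ (m + 1) * x ≤ d ^ (m + 1) * x := by gcongr; linarith
    _ = d ^ m * (d * x) := by ring
    _ ≤ d ^ m * y := by gcongr

theorem le_pow_mul_of_two_div_pow_mul_le {d x y : ℝ} (hd : 0 < d) (hy : 0 ≤ y) {m : ℕ}
    (h : (2 / d) ^ m * y ≤ x) : y ≤ d ^ m * x :=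
  calc y ≤ 2 ^ m * y := le_mul_of_one_le_left hy (one_le_pow₀ one_le_two)
    _ = d ^ m * ((2 / d) ^ m * y) := by rw [← mul_assoc, ← mul_pow, mul_div_cancel₀ _ hd.ne']
    _ ≤ d ^ m * x := by gcongr

section ExtendTuple

variable {r n m : ℕ} {G : SimpleGraph (MV r n)} {c : ℕ → {j : Fin r // j.val ≠ 0}}
  {v : MV r n} (hv : v.1.val ≠ 0) (hc_inj : Injective (fun t : Fin m => c t))
  (hc_range : ∀ x, x ∈ Set.range (fun t : Fin m => c t) ↔ x ≠ ⟨v.1, hv⟩)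
include hc_inj hc_range

theorem setOf_forall_adj_extend (A : Finset (MV r n)) (f : Fin m → Fin n) :
    {u | u ∈ A ∧ ∀ k, G.Adj u (extend (fun t : Fin m => c t) (fun t => ((c t).1, f t))
      (fun _ => v) k)} = ↑(commonNbhd G c {u ∈ A | G.Adj u v} f) := by
  have hb : (⟨v.1, hv⟩ : {j : Fin r // j.val ≠ 0}) ∉ Set.range (fun t : Fin m => c t) := by
    simp [hc_range]
  ext u
  simp only [Set.mem_ofPred_eq, forall_extend_iff hc_inj hb, commonNbhd, coe_filter, mem_filter,
    and_assoc]

theorem isTupleFX_extend {d : ℝ} {X : Finset (MV r n)} (f : Fin m → Fin n)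
    (h₁ : (d / 2) ^ (r - 1) * n ≤ #(commonNbhd G c {u ∈ classFinset r n 0 | G.Adj u v} f))
    (h₂ : (d / 2) ^ (r - 1) * #X ≤ #(commonNbhd G c {u ∈ X | G.Adj u v} f)) :
    IsTupleFX r n G d X (extend (fun t : Fin m => c t) (fun t => ((c t).1, f t)) (fun _ => v)) := by
  refine ⟨⟨fun k => ?_, ?_⟩, ?_⟩
  · by_cases hk : k ∈ Set.range (fun t : Fin m => c t)
    · obtain ⟨t, rfl⟩ := hk
      rw [hc_inj.extend_apply]
    · obtain rfl : k = ⟨v.1, hv⟩ := by simpa [hc_range] using hk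
      rw [extend_apply' _ _ _ hk]
  · convert h₁ using 2
    rw [← Set.ncard_coe_finset, ← setOf_forall_adj_extend hv hc_inj hc_range]
    simp [classFinset]
  · rwa [setOf_forall_adj_extend hv hc_inj hc_range, Set.ncard_coe_finset]

theorem card_isGoodChain_le_ncard_isTupleFX {d : ℝ} (hd : 0 ≤ d) {X : Finset (MV r n)}
    (hr : r = m + 2) (hvV : d * n ≤ #{u ∈ classFinset r n 0 | G.Adj u v})
    (hvX : d * #X ≤ #{u ∈ X | G.Adj u v}) :
    #{f : Fin m → Fin n | IsGoodChain (fun k p a =>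
        IsDenseStep G c d {u ∈ classFinset r n 0 | G.Adj u v} k p a ∧
        IsDenseStep G c d {u ∈ X | G.Adj u v} k p a) m f} ≤
      Set.ncard {g : {k : Fin r // k.val ≠ 0} → MV r n | IsTupleFX r n G d X g ∧ ∃ k, g k = v} := by
  have hb : (⟨v.1, hv⟩ : {j : Fin r // j.val ≠ 0}) ∉ Set.range (fun t : Fin m => c t) := by
    simp [hc_range]
  have hr1 : r - 1 = m + 1 := by omega
  rw [← Set.ncard_coe_finset]
  refine Set.ncard_le_ncard_of_injOn
    (fun f => extend (fun t : Fin m => c t) (fun t => ((c t).1, f t)) (fun _ => v))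
    (fun f hf => ?_) (fun f₁ _ f₂ _ h => funext fun t => ?_) (Set.toFinite _)
  · replace hf := (mem_filter.1 hf).2
    refine ⟨isTupleFX_extend hv hc_inj hc_range f ?_ ?_, ⟨v.1, hv⟩, extend_apply' _ _ _ hb⟩
    · rw [hr1]
      exact (half_pow_succ_mul_le_pow_mul hd (Nat.cast_nonneg _) hvV m).trans
        (pow_mul_card_le_card_commonNbhd hd (hf.mono fun _ _ _ h => h.1))
    · rw [hr1]
      exact (half_pow_succ_mul_le_pow_mul hd (Nat.cast_nonneg _) hvX m).trans
        (pow_mul_card_le_card_commonNbhd hd (hf.mono fun _ _ _ h => h.2))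
  · simpa [hc_inj.extend_apply] using congrFun h (c t)

end ExtendTuple

theorem le_ncard_isTupleFX {r n : ℕ} {ε d : ℝ} (hε : 0 ≤ ε) (hd : 0 < d)
    (hεd : ε ≤ (d / 2) ^ (r - 2)) {G : SimpleGraph (MV r n)}
    (hsr : ∀ i : Fin r, i.val ≠ 0 →
      IsSuperRegularR G.Adj ε d (classFinset r n 0) (classFinset r n i.val))
    {X : Finset (MV r n)} (hX : X ⊆ classFinset r n 0)
    (hXcard : (2 / d) ^ (r - 2) * ε * n ≤ #X) {v : MV r n} (hv : v.1.val ≠ 0)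
    (hvX : d * #X ≤ #{u ∈ X | G.Adj u v}) :
    (1 - 2 * ((r : ℝ) - 2) * ε) * (n : ℝ) ^ (r - 2) ≤
      Set.ncard {g : {k : Fin r // k.val ≠ 0} → MV r n | IsTupleFX r n G d X g ∧ ∃ k, g k = v} := by
  obtain ⟨m, rfl⟩ : ∃ m, r = m + 2 := ⟨r - 2, by have := v.1.isLt; omega⟩
  have hvr : v ∈ classFinset (m + 2) n v.1 := by simp [classFinset]
  have hvV : d * n < #{u ∈ classFinset (m + 2) n 0 | G.Adj u v} := by
    simpa [card_classFinset n (by omega : 0 < m + 2)] using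
      (hsr _ hv).mul_card_lt_card_filter_right hvr
  have hd1 : d ≤ 1 := ((hsr _ hv).lt_one hvr).le
  have hεV : ε * n ≤ d ^ m * n := by
    gcongr
    exact hεd.trans (pow_le_pow_left₀ (by positivity) (by linarith) m)
  have hεX : ε * n ≤ d ^ m * #X :=
    le_pow_mul_of_two_div_pow_mul_le hd (by positivity) (by simpa [mul_assoc] using hXcard)
  obtain ⟨c, hc_inj, hc_range⟩ := exists_injective_range_eq_compl (m := m)
    (by rw [card_subtype_val_ne_zero]; rfl) (⟨v.1, hv⟩ : {j : Fin (m + 2) // j.val ≠ 0})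
  calc (1 - 2 * (((m + 2 : ℕ) : ℝ) - 2) * ε) * (n : ℝ) ^ (m + 2 - 2)
      = (1 - m * (2 * ε)) * (n : ℝ) ^ m := by push_cast; ring_nf
    _ ≤ _ := card_isGoodChain_isDenseStep_ge (c := c) hε hd.le hsr (filter_subset _ _)
        ((filter_subset _ _).trans hX) m
        (fun k hk => hεV.trans (pow_mul_le_pow_mul_of_lt hd.le hd1 (by positivity) hvV.le hk))
        (fun k hk => hεX.trans (pow_mul_le_pow_mul_of_lt hd.le hd1 (by positivity) hvX hk))
    _ ≤ _ := Nat.cast_le.2 (card_isGoodChain_le_ncard_isTupleFX hv hc_inj hc_range hd.le rfl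
        hvV.le hvX)

theorem statement11_general (r n : ℕ) (ε d : ℝ) (hε : 0 < ε) (hd : 0 < d)
    (hεd : ε ≤ (d / 2) ^ (r - 2))
    (G : SimpleGraph (MV r n))
    (hsr : ∀ i : Fin r, i.val ≠ 0 →
      IsSuperRegularR G.Adj ε d (classFinset r n 0) (classFinset r n i.val))
    (X : Finset (MV r n)) (hX : ∀ v ∈ X, v.1.val = 0)
    (hXcard : (2 / d) ^ (r - 2) * ε * n ≤ (X.card : ℝ)) :
    -- for each i ∈ {2,…,r}, all but at most εn vertices of V_i have degree at least
    -- (1 − 2(r−2)ε)·n^{r−2} in F_X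
    ∀ i : Fin r, i.val ≠ 0 →
      (Set.ncard {v : MV r n | v.1 = i ∧
        (Set.ncard {g : {k : Fin r // k.val ≠ 0} → MV r n |
          IsTupleFX r n G d X g ∧ ∃ k, g k = v} : ℝ) <
            (1 - 2 * ((r : ℝ) - 2) * ε) * (n : ℝ) ^ (r - 2)} : ℝ) ≤ ε * n := by
  intro i hi
  have hXV : X ⊆ classFinset r n 0 := fun u hu => by simp [classFinset, hX u hu]
  have hεX : ε * n ≤ #X := by
    rcases n.eq_zero_or_pos with rfl | hn
    · simp
    have hd1 := (hsr i hi).lt_one (b := (i, ⟨0, hn⟩)) (by simp [classFinset])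
    refine le_trans ?_ hXcard
    rw [mul_assoc]
    exact le_mul_of_one_le_left (by positivity) (one_le_pow₀ (by rw [le_div_iff₀ hd]; linarith))
  set B : Finset (MV r n) := {v ∈ classFinset r n i | (#{u ∈ X | G.Adj u v} : ℝ) < d * #X}
  have hB : (#B : ℝ) ≤ ε * n := by
    simpa [card_classFinset n i.isLt] using (hsr i hi).card_filter_lt_le hε.le hXV
      (by rwa [card_classFinset n i.pos])
  refine le_trans (Nat.cast_le.2 (Set.ncard_le_ncard (t := ↑B) ?_)) (by rwa [Set.ncard_coe_finset])
  rintro v ⟨rfl, hlow⟩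
  refine mem_filter.2 ⟨by simp [classFinset], lt_of_not_ge fun hvX => hlow.not_ge ?_⟩
  exact le_ncard_isTupleFX hε.le hd hεd hsr hXV hXcard hi hvX

theorem statement11 (r n : ℕ) (hr : 3 ≤ r) (ε d : ℝ) (hε : 0 < ε) (hd : 0 < d)
    (hεd : ε ≤ (d / 2) ^ (r - 2))
    (G : SimpleGraph (MV r n)) (hGpart : IsMultipartite r n G)
    (hsr : ∀ i : Fin r, i.val ≠ 0 →
      IsSuperRegularR G.Adj ε d (classFinset r n 0) (classFinset r n i.val))
    (X : Finset (MV r n)) (hX : ∀ v ∈ X, v.1.val = 0)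
    (hXcard : (2 / d) ^ (r - 2) * ε * n ≤ (X.card : ℝ)) :
    -- for each i ∈ {2,…,r}, all but at most εn vertices of V_i have degree at least
    -- (1 − 2(r−2)ε)·n^{r−2} in F_X
    ∀ i : Fin r, i.val ≠ 0 →
      (Set.ncard {v : MV r n | v.1 = i ∧
        (Set.ncard {g : {k : Fin r // k.val ≠ 0} → MV r n |
          IsTupleFX r n G d X g ∧ ∃ k, g k = v} : ℝ) <
            (1 - 2 * ((r : ℝ) - 2) * ε) * (n : ℝ) ^ (r - 2)} : ℝ) ≤ ε * n :=
  statement11_general r n ε d hε hd hεd G hsr X hX hXcard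
end
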